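/- For any two probability measures P and Q on the same measurable space, the Jensen–Shannon divergence dominates half the squared total variation distance: D_JS(P ‖ Q) ≥ (1/2) · D_TV(P, Q)². -/

import Mathlib

/-! With `M = (P + Q) / 2`, the densities `f = dP/dM` and `g = dQ/dM` satisfy `f + g = 2`, so
`f = 1 + u` and `g = 1 - u` with `|u| ≤ 1`, where `u = (f - g) / 2`. Splitting a set `A` against
its complement gives `D_TV(P, Q) ≤ ∫ |u| dM`, while
`2 D_JS(P ‖ Q) = ∫ (1 + u) log (1 + u) + (1 - u) log (1 - u) dM ≥ ∫ u² dM ≥ (∫ |u| dM)²`.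
The pointwise bound `(1 + t) log (1 + t) + (1 - t) log (1 - t) ≥ t²` is obtained by integrating
`log (1 + t) - log (1 - t) ≥ 2 t`, which holds because the left side is an odd power series
with nonnegative coefficients and leading term `2 t`. -/

open MeasureTheory

noncomputable section

/-- Total variation distance between two measures. -/
def tvDist {α : Type*} [MeasurableSpace α] (P Q : Measure α) : ℝ :=
  ⨆ A : {A : Set α // MeasurableSet A}, |(P A.1).toReal - (Q A.1).toReal|

/-- Kullback–Leibler divergence `D_KL(P‖Q) = ∫ log(dP/dQ) dP`
(for `P ≪ Q`, via the Radon–Nikodym derivative). -/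
def klDiv {α : Type*} [MeasurableSpace α] (P Q : Measure α) : ℝ :=
  ∫ x, Real.log ((P.rnDeriv Q x).toReal) ∂P

/-- Jensen–Shannon divergence
`D_JS(P‖Q) = (1/2)[D_KL(P‖M) + D_KL(Q‖M)]` with `M = (P+Q)/2`. -/
def jsDiv {α : Type*} [MeasurableSpace α] (P Q : Measure α) : ℝ :=
  klDiv P ((2 : ENNReal)⁻¹ • (P + Q)) / 2 + klDiv Q ((2 : ENNReal)⁻¹ • (P + Q)) / 2

open Real
open scoped ENNReal

namespace Real

lemma two_mul_le_log_one_add_sub_log_one_sub {t : ℝ} (h0 : 0 ≤ t) (h1 : t < 1) :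
    2 * t ≤ log (1 + t) - log (1 - t) := by
  have hs := hasSum_log_sub_log_of_abs_lt_one (x := t) (by rwa [abs_of_nonneg h0])
  simpa using le_hasSum hs 0 fun k _ => by positivity

lemma sq_le_one_add_mul_log_add_one_sub_mul_log {t : ℝ} (h0 : 0 ≤ t) (h1 : t ≤ 1) :
    t ^ 2 ≤ (1 + t) * log (1 + t) + (1 - t) * log (1 - t) := by
  set φ : ℝ → ℝ := fun s => (1 + s) * log (1 + s) + (1 - s) * log (1 - s) - s ^ 2
  have hφ' : ∀ s ∈ Set.Ioo (0 : ℝ) 1,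
      HasDerivAt φ (log (1 + s) - log (1 - s) - 2 * s) s := by
    intro s ⟨hs0, hs1⟩
    have hplus := (hasDerivAt_mul_log (by linarith : 1 + s ≠ 0)).comp s
      ((hasDerivAt_id s).const_add 1)
    have hminus := (hasDerivAt_mul_log (by linarith : 1 - s ≠ 0)).comp s
      ((hasDerivAt_id s).const_sub 1)
    exact ((hplus.add hminus).sub (hasDerivAt_pow 2 s)).congr_deriv (by norm_num; ring)
  have hmono : MonotoneOn φ (Set.Icc 0 1) := by
    refine monotoneOn_of_deriv_nonneg (convex_Icc 0 1) ?_ ?_ ?_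
    · exact ((continuous_mul_log.comp (by fun_prop)).add
        (continuous_mul_log.comp (by fun_prop)) |>.sub (by fun_prop)).continuousOn
    · rw [interior_Icc]
      exact fun s hs => (hφ' s hs).differentiableAt.differentiableWithinAt
    · rw [interior_Icc]
      intro s hs
      rw [(hφ' s hs).deriv]
      linarith [two_mul_le_log_one_add_sub_log_one_sub hs.1.le hs.2]
  simpa [φ] using hmono ⟨le_rfl, zero_le_one⟩ ⟨h0, h1⟩ h0

lemma sq_half_sub_le_mul_log_add_mul_log {a b : ℝ} (ha : 0 ≤ a) (hb : 0 ≤ b) (hab : a + b = 2) :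
    ((a - b) / 2) ^ 2 ≤ a * log a + b * log b := by
  wlog hba : b ≤ a generalizing a b
  · have := this hb ha (by linarith) (by linarith)
    linarith [show ((b - a) / 2) ^ 2 = ((a - b) / 2) ^ 2 by ring]
  have := sq_le_one_add_mul_log_add_one_sub_mul_log (t := (a - b) / 2) (by linarith) (by linarith)
  rwa [show 1 + (a - b) / 2 = a by linarith, show 1 - (a - b) / 2 = b by linarith] at this

end Real

section

variable {α : Type*} [MeasurableSpace α] {P Q μ : Measure α}

lemma klDiv_eq_integral_mul_log [P.HaveLebesgueDecomposition μ] [SigmaFinite P] (hPμ : P ≪ μ) :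
    klDiv P μ = ∫ x, (P.rnDeriv μ x).toReal * log (P.rnDeriv μ x).toReal ∂μ :=
  (integral_toReal_rnDeriv_mul hPμ).symm

lemma abs_measureReal_sub_le_half_integral_abs_sub [IsProbabilityMeasure P]
    [IsProbabilityMeasure Q] [SigmaFinite μ] (hPμ : P ≪ μ) (hQμ : Q ≪ μ) {A : Set α}
    (hA : MeasurableSet A) :
    |P.real A - Q.real A| ≤
      (1 / 2) * ∫ x, |(P.rnDeriv μ x).toReal - (Q.rnDeriv μ x).toReal| ∂μ := by
  set h : α → ℝ := fun x => (P.rnDeriv μ x).toReal - (Q.rnDeriv μ x).toReal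
  have hint : Integrable h μ :=
    Measure.integrable_toReal_rnDeriv.sub Measure.integrable_toReal_rnDeriv
  have hsetIntegral (s : Set α) : ∫ x in s, h x ∂μ = P.real s - Q.real s := by
    rw [integral_sub Measure.integrable_toReal_rnDeriv.integrableOn
      Measure.integrable_toReal_rnDeriv.integrableOn, Measure.setIntegral_toReal_rnDeriv hPμ,
      Measure.setIntegral_toReal_rnDeriv hQμ]
  have hcompl : P.real Aᶜ - Q.real Aᶜ = -(P.real A - Q.real A) := by
    rw [probReal_compl_eq_one_sub hA, probReal_compl_eq_one_sub hA]
    ring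
  calc |P.real A - Q.real A|
      = (1 / 2) * (|∫ x in A, h x ∂μ| + |∫ x in Aᶜ, h x ∂μ|) := by
        rw [hsetIntegral, hsetIntegral, hcompl, abs_neg]
        ring
    _ ≤ (1 / 2) * (∫ x in A, |h x| ∂μ + ∫ x in Aᶜ, |h x| ∂μ) := by
        gcongr <;> exact abs_integral_le_integral_abs
    _ = (1 / 2) * ∫ x, |h x| ∂μ := by
        rw [integral_add_compl hA hint.abs]

lemma tvDist_nonneg (P Q : Measure α) : 0 ≤ tvDist P Q :=
  Real.iSup_nonneg fun _ => abs_nonneg _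

lemma tvDist_le_half_integral_abs_sub [IsProbabilityMeasure P]
    [IsProbabilityMeasure Q] [SigmaFinite μ] (hPμ : P ≪ μ) (hQμ : Q ≪ μ) :
    tvDist P Q ≤ (1 / 2) * ∫ x, |(P.rnDeriv μ x).toReal - (Q.rnDeriv μ x).toReal| ∂μ :=
  Real.iSup_le (fun A => abs_measureReal_sub_le_half_integral_abs_sub hPμ hQμ A.2)
    (by positivity)

lemma sq_integral_le_integral_sq [IsProbabilityMeasure μ] {f : α → ℝ} (hf : MemLp f 2 μ) :
    (∫ x, f x ∂μ) ^ 2 ≤ ∫ x, f x ^ 2 ∂μ := by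
  have := ProbabilityTheory.variance_nonneg f μ
  rw [ProbabilityTheory.variance_eq_sub hf] at this
  simpa [sub_nonneg] using this

lemma integrable_comp_of_ae_mem_Icc [IsFiniteMeasure μ] {φ : ℝ → ℝ} (hφ : Continuous φ)
    {f : α → ℝ} (hf : Measurable f) {a b : ℝ} (hab : ∀ᵐ x ∂μ, f x ∈ Set.Icc a b) :
    Integrable (fun x => φ (f x)) μ := by
  obtain ⟨C, hC⟩ := isCompact_Icc.exists_bound_of_continuousOn hφ.continuousOn
  exact .of_bound (hφ.measurable.comp hf).aestronglyMeasurable C (hab.mono fun x hx => hC _ hx)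

end

section Midpoint

variable {α : Type*} [MeasurableSpace α] (P Q : Measure α)

instance isProbabilityMeasure_midpoint [IsProbabilityMeasure P] [IsProbabilityMeasure Q] :
    IsProbabilityMeasure ((2 : ℝ≥0∞)⁻¹ • (P + Q)) :=
  ⟨by simp [ENNReal.inv_two_add_inv_two]⟩

lemma absolutelyContinuous_midpoint_left : P ≪ (2 : ℝ≥0∞)⁻¹ • (P + Q) :=
  (Measure.AbsolutelyContinuous.rfl.add_right Q).smul_right (by simp)

lemma absolutelyContinuous_midpoint_right : Q ≪ (2 : ℝ≥0∞)⁻¹ • (P + Q) :=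
  (Measure.AbsolutelyContinuous.rfl.add_right' P).smul_right (by simp)

variable [IsProbabilityMeasure P] [IsProbabilityMeasure Q]

lemma toReal_rnDeriv_add_toReal_rnDeriv_midpoint :
    ∀ᵐ x ∂(2 : ℝ≥0∞)⁻¹ • (P + Q), (P.rnDeriv ((2 : ℝ≥0∞)⁻¹ • (P + Q)) x).toReal +
      (Q.rnDeriv ((2 : ℝ≥0∞)⁻¹ • (P + Q)) x).toReal = 2 := by
  set M := (2 : ℝ≥0∞)⁻¹ • (P + Q)
  have hPQ : P + Q = (2 : ℝ≥0∞) • M := by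
    rw [smul_smul, ENNReal.mul_inv_cancel two_ne_zero ENNReal.ofNat_ne_top, one_smul]
  have hsmul := Measure.rnDeriv_smul_left_of_ne_top' M M ENNReal.ofNat_ne_top (r := 2)
  rw [← hPQ] at hsmul
  filter_upwards [Measure.rnDeriv_add' P Q M, hsmul, Measure.rnDeriv_self M,
    Measure.rnDeriv_lt_top P M, Measure.rnDeriv_lt_top Q M] with x hsum hsmul hself hPfin hQfin
  rw [← ENNReal.toReal_add hPfin.ne hQfin.ne, ← Pi.add_apply, ← hsum, hsmul]
  simp [hself]

lemma toReal_rnDeriv_midpoint_mem_Icc :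
    ∀ᵐ x ∂(2 : ℝ≥0∞)⁻¹ • (P + Q),
      (P.rnDeriv ((2 : ℝ≥0∞)⁻¹ • (P + Q)) x).toReal ∈ Set.Icc 0 2 ∧
        (Q.rnDeriv ((2 : ℝ≥0∞)⁻¹ • (P + Q)) x).toReal ∈ Set.Icc 0 2 := by
  filter_upwards [toReal_rnDeriv_add_toReal_rnDeriv_midpoint P Q] with x hx
  have hP := (P.rnDeriv ((2 : ℝ≥0∞)⁻¹ • (P + Q)) x).toReal_nonneg
  have hQ := (Q.rnDeriv ((2 : ℝ≥0∞)⁻¹ • (P + Q)) x).toReal_nonneg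
  exact ⟨⟨hP, by linarith⟩, ⟨hQ, by linarith⟩⟩

lemma half_integral_sq_half_sub_le_jsDiv :
    (1 / 2) * ∫ x, (((P.rnDeriv ((2 : ℝ≥0∞)⁻¹ • (P + Q)) x).toReal -
      (Q.rnDeriv ((2 : ℝ≥0∞)⁻¹ • (P + Q)) x).toReal) / 2) ^ 2 ∂(2 : ℝ≥0∞)⁻¹ • (P + Q) ≤
      jsDiv P Q := by
  set M := (2 : ℝ≥0∞)⁻¹ • (P + Q)
  set f := fun x => (P.rnDeriv M x).toReal
  set g := fun x => (Q.rnDeriv M x).toReal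
  have hbounds := toReal_rnDeriv_midpoint_mem_Icc P Q
  have hf_log : Integrable (fun x => f x * log (f x)) M :=
    integrable_comp_of_ae_mem_Icc continuous_mul_log
      (Measure.measurable_rnDeriv P M).ennreal_toReal (hbounds.mono fun _ hx => hx.1)
  have hg_log : Integrable (fun x => g x * log (g x)) M :=
    integrable_comp_of_ae_mem_Icc continuous_mul_log
      (Measure.measurable_rnDeriv Q M).ennreal_toReal (hbounds.mono fun _ hx => hx.2)
  have hpointwise : ∀ᵐ x ∂M, ((f x - g x) / 2) ^ 2 ≤ f x * log (f x) + g x * log (g x) := by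
    filter_upwards [hbounds, toReal_rnDeriv_add_toReal_rnDeriv_midpoint P Q] with x hx hsum
    exact sq_half_sub_le_mul_log_add_mul_log hx.1.1 hx.2.1 hsum
  calc (1 / 2) * ∫ x, ((f x - g x) / 2) ^ 2 ∂M
      ≤ (1 / 2) * ∫ x, (f x * log (f x) + g x * log (g x)) ∂M :=
        mul_le_mul_of_nonneg_left (integral_mono_of_nonneg (ae_of_all _ fun _ => sq_nonneg _)
          (hf_log.add hg_log) hpointwise) one_half_pos.le
    _ = jsDiv P Q := by
        rw [integral_add hf_log hg_log, jsDiv,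
          klDiv_eq_integral_mul_log (absolutelyContinuous_midpoint_left P Q),
          klDiv_eq_integral_mul_log (absolutelyContinuous_midpoint_right P Q)]
        ring

end Midpoint

/-- For any two probability measures `P, Q` on the same measurable space,
`D_JS(P ‖ Q) ≥ (1/2) · D_TV(P, Q)²`. -/
theorem half_sq_tvDist_le_jsDiv {α : Type*} [MeasurableSpace α]
    (P Q : Measure α) [IsProbabilityMeasure P] [IsProbabilityMeasure Q] :
    (1 / 2) * tvDist P Q ^ 2 ≤ jsDiv P Q := by
  set M := (2 : ℝ≥0∞)⁻¹ • (P + Q)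
  set f := fun x => (P.rnDeriv M x).toReal
  set g := fun x => (Q.rnDeriv M x).toReal
  have hu : MemLp (fun x => (f x - g x) / 2) 2 M := by
    refine .of_bound (((Measure.measurable_rnDeriv P M).ennreal_toReal.sub
      (Measure.measurable_rnDeriv Q M).ennreal_toReal).div_const 2).aestronglyMeasurable 1 ?_
    filter_upwards [toReal_rnDeriv_midpoint_mem_Icc P Q] with x ⟨⟨hf0, hf2⟩, ⟨hg0, hg2⟩⟩
    rw [Real.norm_eq_abs, abs_le]
    constructor <;> linarith
  calc (1 / 2) * tvDist P Q ^ 2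
      ≤ (1 / 2) * (∫ x, |(f x - g x) / 2| ∂M) ^ 2 := by
        gcongr
        · exact tvDist_nonneg P Q
        · refine (tvDist_le_half_integral_abs_sub (absolutelyContinuous_midpoint_left P Q)
            (absolutelyContinuous_midpoint_right P Q)).trans_eq ?_
          simp only [abs_div, abs_two, integral_div]
          ring
    _ ≤ (1 / 2) * ∫ x, ((f x - g x) / 2) ^ 2 ∂M := by
        gcongr
        simpa only [Real.norm_eq_abs, sq_abs] using sq_integral_le_integral_sq hu.norm
    _ ≤ jsDiv P Q := half_integral_sq_half_sub_le_jsDiv P Q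

end
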